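/- arXiv:1911.03210 — 3 statements merged into one kernel-verified Lean document; each statement's English description precedes it below -/
import Mathlib

section
/- Let T≥1, N≥1, x∈ℝⁿ, H∈ℝ^{p×(T−1)}, and let u∈U^N(x,H) be an admissible control sequence. Then, with k_{T,N} := ⌈N/T⌉·T − N, the componentwise inequality Σ_{k=0}^{N−1} h(x_u(k,x),u(k)) ≤ −Σ_{i=1}^{k_{T,N}} H_{T−i} holds (the right-hand sum being 0 if k_{T,N}=0). -/
open Finset Filter
open scoped Classical

noncomputable section

namespace EMPC

abbrev Vec (n : ℕ) : Type := EuclideanSpace ℝ (Fin n)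

variable {n m p : ℕ}

/-- Trajectory of the discrete-time system `x(k+1) = f(x(k), u(k))`. -/
def traj (f : Vec n → Vec m → Vec n) (x : Vec n) (u : ℕ → Vec m) : ℕ → Vec n
  | 0 => x
  | k + 1 => f (traj f x u k) (u k)

/-- Open-loop cost `J_N(x,u)`. -/
def cost (f : Vec n → Vec m → Vec n) (ℓ : Vec n → Vec m → ℝ) (x : Vec n)
    (u : ℕ → Vec m) (N : ℕ) : ℝ :=
  ∑ k ∈ Finset.range N, ℓ (traj f x u k) (u k)

/-- Admissibility `u ∈ U^N(x,H)` for the transient average constrained problem. -/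
def Admissible (f : Vec n → Vec m → Vec n) (h : Vec n → Vec m → Vec p)
    (Z : Set (Vec n × Vec m)) (T N : ℕ) (x : Vec n) (H : ℕ → Vec p)
    (u : ℕ → Vec m) : Prop :=
  (∀ k < N, (traj f x u k, u k) ∈ Z) ∧
  (∀ j ∈ Finset.Icc 1 (T - 1), ∀ i : Fin p,
    (∑ l ∈ Finset.Icc j (T - 1), H l i)
      + ∑ k ∈ Finset.range j, h (traj f x u k) (u k) i ≤ 0) ∧
  (∀ s : ℕ, s + T ≤ N → ∀ i : Fin p,
    ∑ k ∈ Finset.Ico s (s + T), h (traj f x u k) (u k) i ≤ 0)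

/-- Class `K∞` comparison functions. -/
def KInf (α : ℝ → ℝ) : Prop :=
  ContinuousOn α (Set.Ici 0) ∧ StrictMonoOn α (Set.Ici 0) ∧ α 0 = 0 ∧
    Tendsto α atTop atTop

/-- Class `L_ℕ`: decreasing functions on ℕ with limit 0. -/
def LN (δ : ℕ → ℝ) : Prop :=
  Antitone δ ∧ (∀ k, 0 ≤ δ k) ∧ Tendsto δ atTop (nhds 0)

/-- Class `KLS`. -/
def KLS (β : ℝ → ℕ → ℝ) : Prop :=
  (∀ k : ℕ, ContinuousOn (fun r => β r k) (Set.Ici 0) ∧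
    StrictMonoOn (fun r => β r k) (Set.Ici 0) ∧ β 0 k = 0) ∧
  (∀ r : ℝ, 0 ≤ r → LN (fun k => β r k)) ∧
  (∀ r : ℝ, 0 ≤ r → Summable (fun k => β r k)) ∧
  (ContinuousOn (fun r => ∑' k, β r k) (Set.Ici 0) ∧
    StrictMonoOn (fun r => ∑' k, β r k) (Set.Ici 0) ∧ (∑' k, β 0 k) = 0)

/-- Class `KL`. -/
def KLcl (β : ℝ → ℝ → ℝ) : Prop :=
  ContinuousOn (fun q : ℝ × ℝ => β q.1 q.2) (Set.Ici 0 ×ˢ Set.Ici 0) ∧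
  (∀ s : ℝ, 0 ≤ s → StrictMonoOn (fun r => β r s) (Set.Ici 0) ∧ β 0 s = 0) ∧
  (∀ r : ℝ, 0 ≤ r → AntitoneOn (fun s => β r s) (Set.Ici 0) ∧
    Tendsto (fun s => β r s) atTop (nhds 0)) ∧
  (∀ r s : ℝ, 0 ≤ r → 0 ≤ s → 0 ≤ β r s)

/-- ℓ¹-norm of a vector. -/
def l1 (v : Vec p) : ℝ := ∑ i, |v i|

/-- `Ĥ_k = Σ_i max{H_{ik}, 0}`. -/
def hatCol (H : ℕ → Vec p) (k : ℕ) : ℝ := ∑ i, max (H k i) 0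

/-- Norm-like measure `⟨H⟩ = max_{k ∈ {1,…,T-1}} Ĥ_k`. -/
def measH (T : ℕ) (H : ℕ → Vec p) : ℝ := ⨆ k ∈ Finset.Icc 1 (T - 1), hatCol H k

/-- `‖H‖₁ = max_{k ∈ {1,…,T-1}} ‖H_k‖₁`. -/
def norm1H (T : ℕ) (H : ℕ → Vec p) : ℝ := ⨆ k ∈ Finset.Icc 1 (T - 1), l1 (H k)

/-- The set `𝕳` of feasible stored outputs. -/
def HSet (h : Vec n → Vec m → Vec p) (Z : Set (Vec n × Vec m)) (T : ℕ) :
    Set (ℕ → Vec p) :=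
  {H | ∀ k ∈ Finset.Icc 1 (T - 1), ∀ i : Fin p,
    sInf ((fun z : Vec n × Vec m => h z.1 z.2 i) '' Z) ≤ H k i ∧
    H k i ≤ sSup ((fun z : Vec n × Vec m => h z.1 z.2 i) '' Z)}

/-- Value function `J*_N(x,H)`. -/
def Jstar (f : Vec n → Vec m → Vec n) (ℓ : Vec n → Vec m → ℝ)
    (h : Vec n → Vec m → Vec p) (Z : Set (Vec n × Vec m)) (T N : ℕ)
    (x : Vec n) (H : ℕ → Vec p) : ℝ :=
  sInf ((fun u => cost f ℓ x u N) '' {u | Admissible f h Z T N x H u})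

/-- Rotated stage cost `ℓ̃`. -/
def rot (f : Vec n → Vec m → Vec n) (ℓ : Vec n → Vec m → ℝ)
    (h : Vec n → Vec m → Vec p) (ℓs : ℝ) (lam : Vec n → ℝ) (lb : Vec p)
    (x : Vec n) (u : Vec m) : ℝ :=
  ℓ x u - ℓs + lam x - lam (f x u) + ∑ i, lb i * h x u i

/-- Rotated open-loop cost. -/
def rcost (f : Vec n → Vec m → Vec n) (ℓ : Vec n → Vec m → ℝ)
    (h : Vec n → Vec m → Vec p) (ℓs : ℝ) (lam : Vec n → ℝ) (lb : Vec p)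
    (x : Vec n) (u : ℕ → Vec m) (N : ℕ) : ℝ :=
  ∑ k ∈ Finset.range N, rot f ℓ h ℓs lam lb (traj f x u k) (u k)

/-- Rotated value function `J̃*_N(x,H)`. -/
def Jtstar (f : Vec n → Vec m → Vec n) (ℓ : Vec n → Vec m → ℝ)
    (h : Vec n → Vec m → Vec p) (Z : Set (Vec n × Vec m)) (T : ℕ)
    (ℓs : ℝ) (lam : Vec n → ℝ) (lb : Vec p) (N : ℕ)
    (x : Vec n) (H : ℕ → Vec p) : ℝ :=
  sInf ((fun u => rcost f ℓ h ℓs lam lb x u N) '' {u | Admissible f h Z T N x H u})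

/-- `k_{T,N} = ⌈N/T⌉·T − N`. -/
def kTN (T N : ℕ) : ℕ := ((N + T - 1) / T) * T - N

/-- The stored-output matrix along a trajectory, starting at time `d`
(column `k ∈ {1,…,T-1}` is the auxiliary output at time `d + k - 1`). -/
def storedH (f : Vec n → Vec m → Vec n) (h : Vec n → Vec m → Vec p)
    (x : Vec n) (u : ℕ → Vec m) (d : ℕ) : ℕ → Vec p :=
  fun k => h (traj f x u (d + k - 1)) (u (d + k - 1))

/-- Local controllability (Assumption 4). -/
def LocCtrl (f : Vec n → Vec m → Vec n) (h : Vec n → Vec m → Vec p)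
    (Z : Set (Vec n × Vec m)) (T : ℕ) (xs : Vec n) (δc Eh : ℝ) (d : ℕ)
    (γx γu : ℝ → ℝ) : Prop :=
  ∀ (xc : Vec n) (Hc : ℕ → Vec p) (uc : ℕ → Vec m),
    Admissible f h Z T (d + T) xc Hc uc →
    measH T Hc ≤ Eh →
    (∀ k ≤ d + T, ‖traj f xc uc k - xs‖ ≤ δc) →
    ∀ (N₁ : ℕ) (x₁ : Vec n) (H₁ : ℕ → Vec p) (u₁ : ℕ → Vec m),
      d + T ≤ N₁ → x₁ ∈ Prod.fst '' Z → H₁ ∈ HSet h Z T →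
      Admissible f h Z T N₁ x₁ H₁ u₁ →
      measH T (fun k => storedH f h x₁ u₁ d k - storedH f h xc uc d k) ≤ Eh →
      ‖traj f x₁ u₁ d - xs‖ ≤ δc →
      ∀ (x₂ : Vec n) (H₂ : ℕ → Vec p),
        ‖x₂ - xs‖ ≤ δc → measH T (fun k => H₂ k - Hc k) ≤ Eh →
        ∃ u₂ : ℕ → Vec m,
          Admissible f h Z T d x₂ H₂ u₂ ∧
          traj f x₂ u₂ d = traj f x₁ u₁ d ∧
          Admissible f h Z T N₁ x₂ H₂ (fun k => if k < d then u₂ k else u₁ k) ∧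
          ∀ k ≤ d,
            ‖traj f x₂ u₂ k - traj f xc uc k‖ ≤
              γx (max (‖x₂ - xc‖ + measH T (fun j => H₂ j - Hc j))
                (‖traj f x₁ u₁ d - traj f xc uc d‖ +
                  measH T (fun j => storedH f h x₁ u₁ d j - storedH f h xc uc d j))) ∧
            ‖u₂ k - uc k‖ ≤
              γu (max (‖x₂ - xc‖ + measH T (fun j => H₂ j - Hc j))
                (‖traj f x₁ u₁ d - traj f xc uc d‖ +
                  measH T (fun j => storedH f h x₁ u₁ d j - storedH f h xc uc d j)))

/-- Shift dynamics of the stored outputs: `f_H(H, y) = [H_2, …, H_{T-1}, y]`. -/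
def shiftH (T : ℕ) (H : ℕ → Vec p) (y : Vec p) : ℕ → Vec p :=
  fun k => if k + 1 < T then H (k + 1) else if k + 1 = T then y else H k

/-- Closed-loop trajectory of the extended state `χ = (x, H)` under the MPC
feedback `μ_N(x,H) = u*_{N,x,H}(0)`. -/
def clTraj (f : Vec n → Vec m → Vec n) (h : Vec n → Vec m → Vec p)
    (ustar : ℕ → Vec n → (ℕ → Vec p) → ℕ → Vec m) (N T : ℕ)
    (χ : Vec n × (ℕ → Vec p)) : ℕ → Vec n × (ℕ → Vec p)
  | 0 => χ
  | k + 1 =>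
    (f (clTraj f h ustar N T χ k).1
        (ustar N (clTraj f h ustar N T χ k).1 (clTraj f h ustar N T χ k).2 0),
      shiftH T (clTraj f h ustar N T χ k).2
        (h (clTraj f h ustar N T χ k).1
          (ustar N (clTraj f h ustar N T χ k).1 (clTraj f h ustar N T χ k).2 0)))

/-!
Write `N = q T + r` with `r = N mod T`. The outputs at times `r, …, N - 1` split into `q` windows
of length `T`, each with nonpositive sum by the moving-window constraint. If `r = 0` then
`k_{T,N} = 0` and we are done; otherwise `k_{T,N} = T - r`, and the initial constraint with
`j = r` bounds the outputs at times `0, …, r - 1` by `-(H_r + ⋯ + H_{T-1})`, which is the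
right-hand side read backwards.
-/

theorem kTN_eq_zero_of_dvd {T N : ℕ} (h : T ∣ N) : kTN T N = 0 := by
  obtain ⟨q, rfl⟩ := h
  rcases Nat.eq_zero_or_pos T with rfl | hT
  · simp [kTN]
  · have hdiv : (T * q + T - 1) / T = q := by
      rw [show T * q + T - 1 = (T - 1) + T * q by omega, Nat.add_mul_div_left _ _ hT,
        Nat.div_eq_of_lt (by omega), zero_add]
    simp [kTN, hdiv, Nat.mul_comm]

theorem kTN_add_mod {T N : ℕ} (hT : 0 < T) (hr : N % T ≠ 0) : kTN T N + N % T = T := by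
  have hrT := Nat.mod_lt N hT
  have hdiv : (N + T - 1) / T = N / T + 1 := by
    conv_lhs => rw [← Nat.mod_add_div N T]
    rw [show N % T + T * (N / T) + T - 1 = (N % T - 1) + T * (N / T + 1) by
        rw [Nat.mul_succ]; omega,
      Nat.add_mul_div_left _ _ hT, Nat.div_eq_of_lt (by omega), zero_add]
  have hN := Nat.mod_add_div N T
  rw [kTN, hdiv, Nat.succ_mul, Nat.mul_comm]
  omega

theorem sum_Icc_one_sub {M : Type*} [AddCommMonoid M] (g : ℕ → M) {k T : ℕ} (hk : k < T) :
    ∑ j ∈ Icc 1 k, g (T - j) = ∑ l ∈ Icc (T - k) (T - 1), g l := by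
  refine sum_nbij' (T - ·) (T - ·) ?_ ?_ ?_ ?_ (fun _ _ => rfl) <;>
    intro a ha <;> simp only [mem_Icc] at ha ⊢ <;> omega

theorem sum_Ico_add_mul_nonpos {M : Type*} [AddCommMonoid M] [PartialOrder M]
    [IsOrderedAddMonoid M] {g : ℕ → M} {T N : ℕ}
    (hg : ∀ s, s + T ≤ N → ∑ k ∈ Ico s (s + T), g k ≤ 0) :
    ∀ c a, a + c * T ≤ N → ∑ k ∈ Ico a (a + c * T), g k ≤ 0
  | 0, a, _ => by simp
  | c + 1, a, ha => by
    rw [show a + (c + 1) * T = a + T + c * T by ring] at ha ⊢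
    rw [← sum_Ico_consecutive _ (Nat.le_add_right a T) (Nat.le_add_right _ _)]
    exact add_nonpos (hg a (by omega)) (sum_Ico_add_mul_nonpos hg c (a + T) ha)

theorem Admissible.sum_range_mod_le {f : Vec n → Vec m → Vec n} {h : Vec n → Vec m → Vec p}
    {Z : Set (Vec n × Vec m)} {T N : ℕ} {x : Vec n} {H : ℕ → Vec p} {u : ℕ → Vec m}
    (hu : Admissible f h Z T N x H u) (hT : 0 < T) (i : Fin p) :
    ∑ k ∈ range (N % T), h (traj f x u k) (u k) i ≤ -∑ j ∈ Icc 1 (kTN T N), H (T - j) i := by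
  by_cases hr : N % T = 0
  · simp [hr, kTN_eq_zero_of_dvd (Nat.dvd_of_mod_eq_zero hr)]
  · have hk := kTN_add_mod hT hr
    rw [sum_Icc_one_sub (H · i) (by omega), show T - kTN T N = N % T by omega]
    have hrT := Nat.mod_lt N hT
    have hinit := hu.2.1 (N % T) (mem_Icc.2 ⟨by omega, by omega⟩) i
    linarith

theorem bound_by_past_outputs_general (n m p T N : ℕ) (hT : 1 ≤ T)
    (f : Vec n → Vec m → Vec n) (h : Vec n → Vec m → Vec p)
    (Z : Set (Vec n × Vec m)) (x : Vec n) (H : ℕ → Vec p) (u : ℕ → Vec m)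
    (hu : Admissible f h Z T N x H u) :
    ∀ i : Fin p,
      (∑ k ∈ Finset.range N, h (traj f x u k) (u k) i) ≤
        -(∑ j ∈ Finset.Icc 1 (kTN T N), H (T - j) i) := by
  intro i
  have hN : N % T + N / T * T = N := Nat.mod_add_div' N T
  have hwindows := sum_Ico_add_mul_nonpos (g := fun k => h (traj f x u k) (u k) i)
    (fun s hs => hu.2.2 s hs i) (N / T) (N % T) hN.le
  rw [hN] at hwindows
  rw [← sum_range_add_sum_Ico _ (Nat.mod_le N T)]
  linarith [hu.sum_range_mod_le hT i]

theorem bound_by_past_outputs (n m p T N : ℕ) (hT : 1 ≤ T) (hN : 1 ≤ N)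
    (f : Vec n → Vec m → Vec n) (h : Vec n → Vec m → Vec p)
    (Z : Set (Vec n × Vec m)) (x : Vec n) (H : ℕ → Vec p) (u : ℕ → Vec m)
    (hu : Admissible f h Z T N x H u) :
    ∀ i : Fin p,
      (∑ k ∈ Finset.range N, h (traj f x u k) (u k) i) ≤
        -(∑ j ∈ Finset.Icc 1 (kTN T N), H (T - j) i) :=
  bound_by_past_outputs_general n m p T N hT f h Z x H u hu

end EMPC
end
end

section
/- (Theorem 1, part II: turnpike over T consecutive time instants.) Let Assumptions 1–3 hold, let (x_s,u_s)∈Z be a steady-state (f(x_s,u_s)=x_s, h_s:=h(x_s,u_s)≤0 componentwise), and assume the value function infimum is attained by a unique minimizer for every horizon and every initial condition in X×𝕳. Then there exists σ_T∈L_ℕ such that for any (x,H)∈X×𝕳 with each column of H in h(Z):={h(x,u):(x,u)∈Z}, any N∈ℕ and any integers k′_l,k′_u with 0≤k′_l≤k′_u−T²−1 and k′_u≤N−1, there exists k_x∈{k′_l+T−1,…,k′_u} such that the optimal trajectory u*:=u*_{N,x,H} satisfies ‖(x_{u*}(k,x)−x_s, u*(k)−u_s)‖ ≤ ε and ‖h(x_{u*}(k,x),u*(k))−h_s‖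 ≤ L_h·ε for all k∈{k_x−T+1,…,k_x}, where ε := σ_T(k′_u−k′_l−T²). -/
open Finset Filter
open scoped Classical

noncomputable section

namespace EMPC

variable {n m p : ℕ}

/-!
Summing the strict dissipation inequality along an optimal trajectory telescopes the storage
function, and the rotated cost it produces is bounded independently of the horizon: the stage
costs are compared with an asymptotically controllable candidate, whose excess cost is summable
by the `KLS` bounds, and the multiplier term `λ̄ᵀ Σ h` is nonpositive over every full window of `T`
steps. Hence `Σ ρ(‖(x(k) - x_s, u(k) - u_s)‖) ≤ C` uniformly. With `s = k'_u - k'_l - T²`, the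
range `{k'_l, …, k'_u}` holds `⌊(k'_u - k'_l)/T⌋ ≥ (s + 1)/T` disjoint windows of length `T`; not
all of them can contain a point with `ρ`-cost above `ρ(σ_T(s)) = 2CT/(s + 1)`, and on a window
without such a point the state, the input and (by Lipschitz continuity) the auxiliary output stay
close to the steady state.
-/

section ComparisonFunctions

variable {α : ℝ → ℝ}

lemma KInf.mono (hα : KInf α) {r s : ℝ} (hr : 0 ≤ r) (hrs : r ≤ s) : α r ≤ α s :=
  hα.2.1.monotoneOn hr (hr.trans hrs) hrs

lemma KInf.nonneg (hα : KInf α) {r : ℝ} (hr : 0 ≤ r) : 0 ≤ α r :=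
  hα.2.2.1 ▸ hα.mono le_rfl hr

lemma KInf.exists_eq (hα : KInf α) {c : ℝ} (hc : 0 ≤ c) : ∃ r, 0 ≤ r ∧ α r = c := by
  obtain ⟨b, hcb, hb⟩ := ((hα.2.2.2.eventually_ge_atTop c).and (eventually_ge_atTop 0)).exists
  obtain ⟨r, hr, hαr⟩ := intermediate_value_Icc hb (hα.1.mono Set.Icc_subset_Ici_self)
    ⟨hα.2.2.1.symm ▸ hc, hcb⟩
  exact ⟨r, hr.1, hαr⟩

lemma KInf.exists_LN_inv (hα : KInf α) {c : ℝ} (hc : 0 < c) :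
    ∃ σ : ℕ → ℝ, LN σ ∧ ∀ s : ℕ, α (σ s) = c / (s + 1) := by
  choose σ hσ0 hασ using fun s : ℕ => hα.exists_eq (c := c / (s + 1)) (by positivity)
  refine ⟨σ, ⟨fun a b hab => ?_, hσ0, ?_⟩, hασ⟩
  · rw [← hα.2.1.le_iff_le (hσ0 b) (hσ0 a), hασ, hασ]
    gcongr
  · refine tendsto_order.2 ⟨fun ε hε => Eventually.of_forall fun s => hε.trans_le (hσ0 s),
      fun ε hε => ?_⟩
    have hαε : 0 < α ε := hα.2.2.1 ▸ hα.2.1 Set.self_mem_Ici hε.le hε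
    have hc_div : Tendsto (fun s : ℕ => c * (1 / ((s : ℝ) + 1))) atTop (nhds 0) := by
      simpa using tendsto_one_div_add_atTop_nhds_zero_nat.const_mul c
    filter_upwards [hc_div.eventually (gt_mem_nhds hαε)] with s hs
    rw [← hα.2.1.lt_iff_lt (hσ0 s) hε.le, hασ]
    simpa [div_eq_mul_one_div c] using hs

end ComparisonFunctions

lemma KLS.sum_range_le_tsum {β : ℝ → ℕ → ℝ} (hβ : KLS β) {r R : ℝ} (hr : 0 ≤ r) (hrR : r ≤ R)
    (N : ℕ) : ∑ k ∈ range N, β r k ≤ ∑' k, β R k :=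
  (Summable.sum_le_tsum _ (fun k _ => (hβ.2.1 r hr).2.1 k) (hβ.2.2.1 r hr)).trans
    (hβ.2.2.2.2.1.monotoneOn hr (hr.trans hrR) hrR)

lemma hatCol_le_card_mul_norm (H : ℕ → Vec p) (k : ℕ) : hatCol H k ≤ p * ‖H k‖ := by
  calc hatCol H k ≤ ∑ _i : Fin p, ‖H k‖ := sum_le_sum fun i _ =>
        max_le ((le_abs_self _).trans (by simpa using PiLp.norm_apply_le (H k) i)) (norm_nonneg _)
    _ = p * ‖H k‖ := by simp

lemma measH_le_card_mul {T : ℕ} {H : ℕ → Vec p} {R : ℝ} (hR : 0 ≤ R)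
    (hH : ∀ k ∈ Icc 1 (T - 1), ‖H k‖ ≤ R) : measH T H ≤ p * R :=
  Real.iSup_le (fun k => Real.iSup_le (fun hk => (hatCol_le_card_mul_norm H k).trans
    (mul_le_mul_of_nonneg_left (hH k hk) p.cast_nonneg)) (by positivity)) (by positivity)

lemma measH_nonneg (T : ℕ) (H : ℕ → Vec p) : 0 ≤ measH T H :=
  Real.iSup_nonneg fun _ => Real.iSup_nonneg fun _ => sum_nonneg fun _ _ => le_max_right _ _

section Windows

variable {a : ℕ → ℝ} {T N : ℕ}

lemma sum_range_mul_nonpos (ha : ∀ s, s + T ≤ N → ∑ k ∈ Ico s (s + T), a k ≤ 0) :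
    ∀ w, w * T ≤ N → ∑ k ∈ range (w * T), a k ≤ 0
  | 0, _ => by simp
  | w + 1, hw => by
    rw [add_one_mul] at hw ⊢
    rw [← sum_range_add_sum_Ico _ (Nat.le_add_right _ _)]
    exact add_nonpos (sum_range_mul_nonpos ha w (by omega)) (ha _ hw)

lemma sum_range_le_of_window_sum_nonpos {M : ℕ} {B : ℝ} (hT : 0 < T) (hB : 0 ≤ B)
    (ha : ∀ s, s + T ≤ N → ∑ k ∈ Ico s (s + T), a k ≤ 0) (hMN : M ≤ N)
    (haB : ∀ k < M, a k ≤ B) : ∑ k ∈ range M, a k ≤ T * B := by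
  have hq : M / T * T ≤ M := Nat.div_mul_le_self M T
  have hr : ((M - M / T * T : ℕ) : ℝ) ≤ T := by
    have := Nat.lt_div_mul_add (a := M) hT
    exact_mod_cast (by omega : M - M / T * T ≤ T)
  have hrem : ∑ k ∈ Ico (M / T * T) M, a k ≤ (M - M / T * T : ℕ) * B := by
    simpa using sum_le_card_nsmul (Ico (M / T * T) M) a B fun k hk => haB k (mem_Ico.1 hk).2
  rw [← sum_range_add_sum_Ico _ hq]
  linarith [sum_range_mul_nonpos ha (M / T) (hq.trans hMN), mul_le_mul_of_nonneg_right hr hB]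

end Windows

lemma exists_window_forall_le {ρ : ℝ → ℝ} (hρ : KInf ρ) {b : ℕ → ℝ} (hb : ∀ k, 0 ≤ b k)
    {M : ℕ} {C ε : ℝ} (hε : 0 ≤ ε) (hsum : ∑ k ∈ range M, ρ (b k) ≤ C) {kl T Q : ℕ}
    (hQM : kl + Q * T ≤ M) (hQ : C < Q * ρ ε) :
    ∃ k₀, kl ≤ k₀ ∧ k₀ + T ≤ kl + Q * T ∧ ∀ k ∈ Ico k₀ (k₀ + T), b k ≤ ε := by
  by_contra! hbad
  set S := (Ico kl (kl + Q * T)).filter fun k => ε < b k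
  have hQS : Q ≤ #S := by
    simpa using card_le_card_of_surjOn (t := range Q) (fun k => (k - kl) / T) fun j hj => by
      have hj : j + 1 ≤ Q := mem_range.1 hj
      have hjT := Nat.mul_le_mul_right T hj
      rw [add_one_mul] at hjT
      obtain ⟨k, hk, hεk⟩ := hbad (kl + j * T) le_self_add (by omega)
      rw [mem_Ico] at hk
      refine ⟨k, mem_filter.2 ⟨mem_Ico.2 ⟨by omega, by omega⟩, hεk⟩, ?_⟩
      exact Nat.div_eq_of_lt_le (by omega) (by rw [add_one_mul]; omega)
  have hS : ∑ k ∈ S, ρ (b k) ≤ C :=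
    (sum_le_sum_of_subset_of_nonneg (fun k hk => mem_range.2 (by
      have := (mem_Ico.1 (mem_filter.1 hk).1).2; omega))
      fun k _ _ => hρ.nonneg (hb k)).trans hsum
  have hρS : (#S : ℝ) * ρ ε ≤ ∑ k ∈ S, ρ (b k) := by
    simpa using card_nsmul_le_sum S _ _ fun k hk => hρ.mono hε (mem_filter.1 hk).2.le
  have : (Q : ℝ) * ρ ε ≤ #S * ρ ε :=
    mul_le_mul_of_nonneg_right (by exact_mod_cast hQS) (hρ.nonneg hε)
  linarith

section OptimalTrajectories

variable {f : Vec n → Vec m → Vec n} {ℓ : Vec n → Vec m → ℝ} {h : Vec n → Vec m → Vec p}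
  {Z : Set (Vec n × Vec m)} {T N : ℕ} {x : Vec n} {H : ℕ → Vec p} {u : ℕ → Vec m}

lemma Jstar_le_cost {c : ℝ} (hℓ : ∀ z ∈ Z, c ≤ ℓ z.1 z.2) (hu : Admissible f h Z T N x H u) :
    Jstar f ℓ h Z T N x H ≤ cost f ℓ x u N := by
  refine csInf_le ⟨N * c, ?_⟩ ⟨u, hu, rfl⟩
  rintro _ ⟨v, hv, rfl⟩
  simpa [cost] using card_nsmul_le_sum (range N) _ c fun k hk => hℓ _ (hv.1 k (mem_range.1 hk))

lemma Jstar_le_of_stage_le {β₁ β₂ : ℝ → ℕ → ℝ} (hβ₁ : KLS β₁) (hβ₂ : KLS β₂)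
    {c ℓs r₁ r₂ R₁ R₂ : ℝ} (hℓ : ∀ z ∈ Z, c ≤ ℓ z.1 z.2) (hu : Admissible f h Z T N x H u)
    (hstage : ∀ k < N, ℓ (traj f x u k) (u k) - ℓs ≤ β₁ r₁ k + β₂ r₂ k)
    (hr₁ : 0 ≤ r₁) (hr₁R : r₁ ≤ R₁) (hr₂ : 0 ≤ r₂) (hr₂R : r₂ ≤ R₂) :
    Jstar f ℓ h Z T N x H ≤ N * ℓs + (∑' k, β₁ R₁ k + ∑' k, β₂ R₂ k) := by
  have hcost : cost f ℓ x u N ≤ ∑ k ∈ range N, (ℓs + (β₁ r₁ k + β₂ r₂ k)) :=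
    sum_le_sum fun k hk => by linarith [hstage k (mem_range.1 hk)]
  rw [sum_add_distrib, sum_add_distrib, sum_const, card_range, nsmul_eq_mul] at hcost
  linarith [Jstar_le_cost hℓ hu, hβ₁.sum_range_le_tsum hr₁ hr₁R N,
    hβ₂.sum_range_le_tsum hr₂ hr₂R N]

variable {ℓs : ℝ} {lam : Vec n → ℝ} {lb : Vec p} {ρ : ℝ → ℝ} {xs : Vec n} {us : Vec m}

lemma sum_rho_le_of_dissipative {M : ℕ}
    (hdiss : ∀ z ∈ Z, lam (f z.1 z.2) - lam z.1 ≤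
      ℓ z.1 z.2 - ℓs + (∑ i, lb i * h z.1 z.2 i) - ρ ‖(z.1 - xs, z.2 - us)‖)
    (hZ : ∀ k < M, (traj f x u k, u k) ∈ Z) :
    ∑ k ∈ range M, ρ ‖(traj f x u k - xs, u k - us)‖ ≤
      ∑ k ∈ range M, (ℓ (traj f x u k) (u k) - ℓs + ∑ i, lb i * h (traj f x u k) (u k) i)
        + (lam x - lam (traj f x u M)) := by
  have htel : lam x - lam (traj f x u M) =
      ∑ k ∈ range M, (lam (traj f x u k) - lam (traj f x u (k + 1))) :=
    (sum_range_sub' (fun k => lam (traj f x u k)) M).symm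
  rw [htel, ← sum_add_distrib]
  refine sum_le_sum fun k hk => ?_
  have := hdiss _ (hZ k (mem_range.1 hk))
  rw [show traj f x u (k + 1) = f (traj f x u k) (u k) from rfl]
  linarith

lemma sum_lb_mul_h_le {M : ℕ} {B : ℝ} (hT : 0 < T) (hB : 0 ≤ B) (hlb : ∀ i, 0 ≤ lb i)
    (hh : ∀ z ∈ Z, ∀ i, h z.1 z.2 i ≤ B) (hu : Admissible f h Z T N x H u) (hMN : M ≤ N) :
    ∑ k ∈ range M, ∑ i, lb i * h (traj f x u k) (u k) i ≤ (∑ i, lb i) * (T * B) := by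
  rw [sum_comm, sum_mul]
  refine sum_le_sum fun i _ => ?_
  rw [← mul_sum]
  exact mul_le_mul_of_nonneg_left (sum_range_le_of_window_sum_nonpos hT hB
    (fun s hs => hu.2.2 s hs i) hMN fun k hk => hh _ (hu.1 k (by omega)) i) (hlb i)

-- The last stage is left out of the sum: the final state `x(M + 1)` need not lie in `X`, outside
-- of which the storage function is not controlled.
lemma sum_rho_le_of_cost_le {M : ℕ} {G L Λ B : ℝ} (hT : 0 < T) (hB : 0 ≤ B)
    (hlb : ∀ i, 0 ≤ lb i) (hℓ : ∀ z ∈ Z, ℓs - L ≤ ℓ z.1 z.2) (hlam : ∀ z ∈ Z, |lam z.1| ≤ Λ)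
    (hh : ∀ z ∈ Z, ∀ i, h z.1 z.2 i ≤ B)
    (hdiss : ∀ z ∈ Z, lam (f z.1 z.2) - lam z.1 ≤
      ℓ z.1 z.2 - ℓs + (∑ i, lb i * h z.1 z.2 i) - ρ ‖(z.1 - xs, z.2 - us)‖)
    (hu : Admissible f h Z T (M + 1) x H u) (hcost : cost f ℓ x u (M + 1) ≤ (M + 1) * ℓs + G) :
    ∑ k ∈ range M, ρ ‖(traj f x u k - xs, u k - us)‖ ≤
      G + L + 2 * Λ + (∑ i, lb i) * (T * B) := by
  have hz0 : (x, u 0) ∈ Z := hu.1 0 M.succ_pos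
  have hzM := hu.1 M M.lt_succ_self
  have hsplit : ∑ k ∈ range M, (ℓ (traj f x u k) (u k) - ℓs + ∑ i, lb i * h (traj f x u k) (u k) i)
      = cost f ℓ x u (M + 1) - ℓ (traj f x u M) (u M) - M * ℓs
        + ∑ k ∈ range M, ∑ i, lb i * h (traj f x u k) (u k) i := by
    rw [cost, sum_range_succ, sum_add_distrib, sum_sub_distrib, sum_const, card_range,
      nsmul_eq_mul]
    ring
  have := sum_rho_le_of_dissipative (M := M) hdiss fun k hk => hu.1 k (by omega)
  rw [hsplit] at this
  linarith [hℓ _ hzM, abs_le.1 (hlam _ hz0), abs_le.1 (hlam _ hzM),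
    sum_lb_mul_h_le hT hB hlb hh hu M.le_succ]

theorem exists_sum_rho_le_of_optimal {αl αlam : ℝ → ℝ} {β₁ β₂ : ℝ → ℕ → ℝ} {Lh : ℝ}
    (hT : 0 < T) (hZ : IsCompact Z) (hαl : KInf αl)
    (hℓ : ∀ z₁ ∈ Z, ∀ z₂ ∈ Z, |ℓ z₁.1 z₁.2 - ℓ z₂.1 z₂.2| ≤ αl ‖(z₁.1 - z₂.1, z₁.2 - z₂.2)‖)
    (hLh : 0 ≤ Lh) (hhL : ∀ z₁ ∈ Z, ∀ z₂ ∈ Z,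
      ‖h z₁.1 z₁.2 - h z₂.1 z₂.2‖ ≤ Lh * ‖(z₁.1 - z₂.1, z₁.2 - z₂.2)‖)
    (hzs : (xs, us) ∈ Z) (hlb : ∀ i, 0 ≤ lb i) (hlam0 : lam xs = 0) (hαlam : KInf αlam)
    (hlam : ∀ x₁ ∈ Prod.fst '' Z, ∀ x₂ ∈ Prod.fst '' Z, |lam x₁ - lam x₂| ≤ αlam ‖x₁ - x₂‖)
    (hdiss : ∀ z ∈ Z, lam (f z.1 z.2) - lam z.1 ≤
      ℓ z.1 z.2 - ℓ xs us + (∑ i, lb i * h z.1 z.2 i) - ρ ‖(z.1 - xs, z.2 - us)‖)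
    (hβ₁ : KLS β₁) (hβ₂ : KLS β₂)
    (hac : ∀ x ∈ Prod.fst '' Z, ∀ H ∈ HSet h Z T, ∀ N : ℕ, ∃ u : ℕ → Vec m,
      Admissible f h Z T N x H u ∧ ∀ k < N, ℓ (traj f x u k) (u k) - ℓ xs us ≤
        β₁ ‖x - xs‖ k + β₂ (measH T (fun j => H j - h xs us)) k) :
    ∃ C, 0 < C ∧ ∀ x ∈ Prod.fst '' Z, ∀ H ∈ HSet h Z T,
      (∀ k ∈ Icc 1 (T - 1), ∃ z ∈ Z, H k = h z.1 z.2) → ∀ (M : ℕ) (u : ℕ → Vec m),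
      Admissible f h Z T (M + 1) x H u → cost f ℓ x u (M + 1) = Jstar f ℓ h Z T (M + 1) x H →
      ∑ k ∈ range M, ρ ‖(traj f x u k - xs, u k - us)‖ ≤ C := by
  obtain ⟨D, hD⟩ : ∃ D, ∀ z ∈ Z, ‖(z.1 - xs, z.2 - us)‖ ≤ D :=
    hZ.exists_bound_of_continuousOn (f := fun z => z - (xs, us)) (by fun_prop)
  have hD0 : 0 ≤ D := by simpa using hD _ hzs
  have hxD : ∀ z ∈ Z, ‖z.1 - xs‖ ≤ D := fun z hz => (norm_fst_le _).trans (hD z hz)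
  have hℓD : ∀ z ∈ Z, ℓ xs us - αl D ≤ ℓ z.1 z.2 := fun z hz => by
    linarith [abs_le.1 ((hℓ z hz _ hzs).trans (hαl.mono (norm_nonneg _) (hD z hz)))]
  have hlamD : ∀ z ∈ Z, |lam z.1| ≤ αlam D := fun z hz => by
    simpa [hlam0] using (hlam _ ⟨z, hz, rfl⟩ _ ⟨_, hzs, rfl⟩).trans
      (hαlam.mono (norm_nonneg _) (hxD z hz))
  have hhD : ∀ z ∈ Z, ‖h z.1 z.2 - h xs us‖ ≤ Lh * D := fun z hz =>
    (hhL z hz _ hzs).trans (mul_le_mul_of_nonneg_left (hD z hz) hLh)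
  have hhB : ∀ z ∈ Z, ∀ i, h z.1 z.2 i ≤ ‖h xs us‖ + Lh * D := fun z hz i => by
    have := (le_abs_self _).trans (PiLp.norm_apply_le (h z.1 z.2) i)
    linarith [norm_le_insert' (h z.1 z.2) (h xs us), hhD z hz]
  set G := ∑' k, β₁ D k + ∑' k, β₂ (p * (Lh * D)) k
  refine ⟨max (G + αl D + 2 * αlam D + (∑ i, lb i) * (T * (‖h xs us‖ + Lh * D))) 1,
    lt_max_of_lt_right one_pos, ?_⟩
  rintro x ⟨z, hz, rfl⟩ H hH hHcol M u hu hopt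
  obtain ⟨v, hv, hstage⟩ := hac _ ⟨z, hz, rfl⟩ H hH (M + 1)
  have hHs : measH T (fun j => H j - h xs us) ≤ p * (Lh * D) :=
    measH_le_card_mul (by positivity) fun k hk => by
      obtain ⟨z', hz', hHk⟩ := hHcol k hk
      exact hHk ▸ hhD z' hz'
  have hJ := Jstar_le_of_stage_le hβ₁ hβ₂ hℓD hv hstage (norm_nonneg _) (hxD z hz)
    (measH_nonneg _ _) hHs
  push_cast at hJ
  exact le_max_of_le_left (sum_rho_le_of_cost_le hT (by positivity) hlb hℓD hlamD hhB hdiss hu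
    (hopt.trans_le hJ))

end OptimalTrajectories

theorem turnpike_T_consecutive_general (n m p T : ℕ) (hT : 1 ≤ T)
    (f : Vec n → Vec m → Vec n) (ℓ : Vec n → Vec m → ℝ)
    (h : Vec n → Vec m → Vec p) (Z : Set (Vec n × Vec m)) (Lh : ℝ)
    (xs : Vec n) (us : Vec m) (lam : Vec n → ℝ) (lb : Vec p) (ρ : ℝ → ℝ)
    (ustar : ℕ → Vec n → (ℕ → Vec p) → ℕ → Vec m)
    -- Assumption 1 (compactness and continuity)
    (hZ : IsCompact Z)
    (halc : ∃ αl : ℝ → ℝ, KInf αl ∧ ∀ z₁ ∈ Z, ∀ z₂ ∈ Z,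
      |ℓ z₁.1 z₁.2 - ℓ z₂.1 z₂.2| ≤ αl ‖(z₁.1 - z₂.1, z₁.2 - z₂.2)‖)
    (hLh : 0 < Lh)
    (hhL : ∀ z₁ ∈ Z, ∀ z₂ ∈ Z,
      ‖h z₁.1 z₁.2 - h z₂.1 z₂.2‖ ≤ Lh * ‖(z₁.1 - z₂.1, z₁.2 - z₂.2)‖)
    -- optimal steady-state
    (hzs : (xs, us) ∈ Z)
    -- Assumption 2 (strict dissipativity)
    (hρ : KInf ρ) (hlb : ∀ i, 0 ≤ lb i) (hlam0 : lam xs = 0)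
    (hlamc : ∃ αlam : ℝ → ℝ, KInf αlam ∧ ∀ x₁ ∈ Prod.fst '' Z, ∀ x₂ ∈ Prod.fst '' Z,
      |lam x₁ - lam x₂| ≤ αlam ‖x₁ - x₂‖)
    (hdiss : ∀ z ∈ Z, lam (f z.1 z.2) - lam z.1 ≤
      ℓ z.1 z.2 - ℓ xs us + (∑ i, lb i * h z.1 z.2 i) - ρ ‖(z.1 - xs, z.2 - us)‖)
    -- Assumption 3 (asymptotic controllability)
    (hac : ∃ β₁ β₂ : ℝ → ℕ → ℝ, KLS β₁ ∧ KLS β₂ ∧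
      ∀ x ∈ Prod.fst '' Z, ∀ H ∈ HSet h Z T, ∀ N : ℕ, ∃ u : ℕ → Vec m,
        Admissible f h Z T N x H u ∧ ∀ k < N,
          ℓ (traj f x u k) (u k) - ℓ xs us ≤
            β₁ ‖x - xs‖ k + β₂ (measH T (fun j => H j - h xs us)) k ∧
          rot f ℓ h (ℓ xs us) lam lb (traj f x u k) (u k) ≤
            β₁ ‖x - xs‖ k + β₂ (measH T (fun j => H j - h xs us)) k)
    -- the value function is attained by the unique minimizer `ustar`
    (hopt : ∀ (N : ℕ), ∀ x ∈ Prod.fst '' Z, ∀ H ∈ HSet h Z T,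
      Admissible f h Z T N x H (ustar N x H) ∧
      cost f ℓ x (ustar N x H) N = Jstar f ℓ h Z T N x H ∧
      ∀ u : ℕ → Vec m, Admissible f h Z T N x H u →
        cost f ℓ x u N = Jstar f ℓ h Z T N x H → ∀ k < N, u k = ustar N x H k)
    :
    ∃ σT : ℕ → ℝ, LN σT ∧
      ∀ (x : Vec n) (H : ℕ → Vec p), x ∈ Prod.fst '' Z → H ∈ HSet h Z T →
        (∀ k ∈ Finset.Icc 1 (T - 1), ∃ z ∈ Z, H k = h z.1 z.2) →
        ∀ (N kl ku : ℕ), kl + T ^ 2 + 1 ≤ ku → ku < N →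
          ∃ kx ∈ Finset.Icc (kl + T - 1) ku,
            ∀ k ∈ Finset.Icc (kx + 1 - T) kx,
              ‖(traj f x (ustar N x H) k - xs, ustar N x H k - us)‖ ≤
                σT (ku - kl - T ^ 2) ∧
              ‖h (traj f x (ustar N x H) k) (ustar N x H k) - h xs us‖ ≤
                Lh * σT (ku - kl - T ^ 2) := by
  obtain ⟨αl, hαl, hℓ⟩ := halc
  obtain ⟨αlam, hαlam, hlam⟩ := hlamc
  obtain ⟨β₁, β₂, hβ₁, hβ₂, hac⟩ := hac
  obtain ⟨C, hC, hbudget⟩ := exists_sum_rho_le_of_optimal hT hZ hαl hℓ hLh.le hhL hzs hlb hlam0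
    hαlam hlam hdiss hβ₁ hβ₂ fun x hx H hH N =>
      (hac x hx H hH N).imp fun u hu => ⟨hu.1, fun k hk => (hu.2 k hk).1⟩
  obtain ⟨σ, hσ, hρσ⟩ := hρ.exists_LN_inv (c := 2 * C * T) (by positivity)
  refine ⟨σ, hσ, fun x H hx hH hHcol N kl ku hku hkuN => ?_⟩
  obtain ⟨M, rfl⟩ : ∃ M, N = M + 1 := ⟨N - 1, by omega⟩
  obtain ⟨hadm, hcost, -⟩ := hopt (M + 1) x hx H hH
  set s := ku - kl - T ^ 2
  have hQ : (ku - kl) / T * T ≤ ku - kl := Nat.div_mul_le_self _ _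
  have hsQ : s + 1 ≤ (ku - kl) / T * T := by
    have := Nat.lt_div_mul_add (a := ku - kl) hT
    have := Nat.le_self_pow two_ne_zero T
    omega
  have hCQ : C < ((ku - kl) / T : ℕ) * ρ (σ s) := by
    have hsQ' : (s : ℝ) + 1 ≤ ((ku - kl) / T : ℕ) * T := by exact_mod_cast hsQ
    rw [hρσ, mul_div_assoc', lt_div_iff₀ (by positivity)]
    nlinarith [mul_le_mul_of_nonneg_left hsQ' (by positivity : (0 : ℝ) ≤ 2 * C)]
  obtain ⟨k₀, hk₀, hk₀T, hwin⟩ := exists_window_forall_le hρ (fun k => norm_nonneg _)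
    (hσ.2.1 s) (hbudget x hx H hH hHcol M _ hadm hcost) (kl := kl) (T := T) (by omega) hCQ
  refine ⟨k₀ + T - 1, mem_Icc.2 ⟨by omega, by omega⟩, fun k hk => ?_⟩
  have hk' := mem_Icc.1 hk
  have hbk := hwin k (mem_Ico.2 ⟨by omega, by omega⟩)
  exact ⟨hbk, (hhL _ (hadm.1 k (by omega)) _ hzs).trans (mul_le_mul_of_nonneg_left hbk hLh.le)⟩

theorem turnpike_T_consecutive (n m p T : ℕ) (hT : 1 ≤ T)
    (f : Vec n → Vec m → Vec n) (ℓ : Vec n → Vec m → ℝ)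
    (h : Vec n → Vec m → Vec p) (Z : Set (Vec n × Vec m)) (Lh : ℝ)
    (xs : Vec n) (us : Vec m) (lam : Vec n → ℝ) (lb : Vec p) (ρ : ℝ → ℝ)
    (ustar : ℕ → Vec n → (ℕ → Vec p) → ℕ → Vec m)
    -- Assumption 1 (compactness and continuity)
    (hZ : IsCompact Z)
    (hfc : ∃ αf : ℝ → ℝ, KInf αf ∧ ∀ z₁ ∈ Z, ∀ z₂ ∈ Z,
      ‖f z₁.1 z₁.2 - f z₂.1 z₂.2‖ ≤ αf ‖(z₁.1 - z₂.1, z₁.2 - z₂.2)‖)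
    (halc : ∃ αl : ℝ → ℝ, KInf αl ∧ ∀ z₁ ∈ Z, ∀ z₂ ∈ Z,
      |ℓ z₁.1 z₁.2 - ℓ z₂.1 z₂.2| ≤ αl ‖(z₁.1 - z₂.1, z₁.2 - z₂.2)‖)
    (hLh : 0 < Lh)
    (hhL : ∀ z₁ ∈ Z, ∀ z₂ ∈ Z,
      ‖h z₁.1 z₁.2 - h z₂.1 z₂.2‖ ≤ Lh * ‖(z₁.1 - z₂.1, z₁.2 - z₂.2)‖)
    -- optimal steady-state
    (hzs : (xs, us) ∈ Z) (hfix : f xs us = xs) (hhs : ∀ i, h xs us i ≤ 0)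
    -- Assumption 2 (strict dissipativity)
    (hρ : KInf ρ) (hlb : ∀ i, 0 ≤ lb i) (hlam0 : lam xs = 0)
    (hlamc : ∃ αlam : ℝ → ℝ, KInf αlam ∧ ∀ x₁ ∈ Prod.fst '' Z, ∀ x₂ ∈ Prod.fst '' Z,
      |lam x₁ - lam x₂| ≤ αlam ‖x₁ - x₂‖)
    (hdiss : ∀ z ∈ Z, lam (f z.1 z.2) - lam z.1 ≤
      ℓ z.1 z.2 - ℓ xs us + (∑ i, lb i * h z.1 z.2 i) - ρ ‖(z.1 - xs, z.2 - us)‖)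
    -- Assumption 3 (asymptotic controllability)
    (hac : ∃ β₁ β₂ : ℝ → ℕ → ℝ, KLS β₁ ∧ KLS β₂ ∧
      ∀ x ∈ Prod.fst '' Z, ∀ H ∈ HSet h Z T, ∀ N : ℕ, ∃ u : ℕ → Vec m,
        Admissible f h Z T N x H u ∧ ∀ k < N,
          ℓ (traj f x u k) (u k) - ℓ xs us ≤
            β₁ ‖x - xs‖ k + β₂ (measH T (fun j => H j - h xs us)) k ∧
          rot f ℓ h (ℓ xs us) lam lb (traj f x u k) (u k) ≤
            β₁ ‖x - xs‖ k + β₂ (measH T (fun j => H j - h xs us)) k)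
    -- the value function is attained by the unique minimizer `ustar`
    (hopt : ∀ (N : ℕ), ∀ x ∈ Prod.fst '' Z, ∀ H ∈ HSet h Z T,
      Admissible f h Z T N x H (ustar N x H) ∧
      cost f ℓ x (ustar N x H) N = Jstar f ℓ h Z T N x H ∧
      ∀ u : ℕ → Vec m, Admissible f h Z T N x H u →
        cost f ℓ x u N = Jstar f ℓ h Z T N x H → ∀ k < N, u k = ustar N x H k)
    :
    ∃ σT : ℕ → ℝ, LN σT ∧
      ∀ (x : Vec n) (H : ℕ → Vec p), x ∈ Prod.fst '' Z → H ∈ HSet h Z T →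
        (∀ k ∈ Finset.Icc 1 (T - 1), ∃ z ∈ Z, H k = h z.1 z.2) →
        ∀ (N kl ku : ℕ), kl + T ^ 2 + 1 ≤ ku → ku < N →
          ∃ kx ∈ Finset.Icc (kl + T - 1) ku,
            ∀ k ∈ Finset.Icc (kx + 1 - T) kx,
              ‖(traj f x (ustar N x H) k - xs, ustar N x H k - us)‖ ≤
                σT (ku - kl - T ^ 2) ∧
              ‖h (traj f x (ustar N x H) k) (ustar N x H k) - h xs us‖ ≤
                Lh * σT (ku - kl - T ^ 2) :=
  turnpike_T_consecutive_general n m p T hT f ℓ h Z Lh xs us lam lb ρ ustar hZ halc hLh hhL hzs hρ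
    hlb hlam0 hlamc hdiss hac hopt

end EMPC
end
end

section
/- (Remark 2 bound.) Let p≥1, T≥2, λ̄∈ℝᵖ with λ̄≥0 componentwise, h_s∈ℝᵖ with λ̄ᵀh_s=0, and H^s:=[h_s,…,h_s]∈ℝ^{p×(T−1)}. Let H∈ℝ^{p×(T−1)} with columns H_1,…,H_{T−1} and let y_0,…,y_{T−2}∈ℝᵖ satisfy the overlapping transient average constraints Σ_{i=j}^{T−1} H_i + Σ_{k=0}^{j−1} y_k ≤ 0 componentwise for all j∈{1,…,T−1}. Then λ̄ᵀ Σ_{j=1}^{T−1} Σ_{k=0}^{j−1} y_k ≤ (T−1)²·‖λ̄‖·‖H−H^s‖₁, where ‖λ̄‖ is the Euclidean norm and ‖H−H^s‖₁ := max_{j∈{1,…,T−1}} ‖H_j−h_s‖₁ with ‖·‖₁ the ℓ¹-norm on ℝᵖ. -/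
/-!
For each `j`, pairing the `j`-th constraint with `lb ≥ 0` and using `lbᵀ hs = 0` gives
`lbᵀ ∑_{k<j} y_k ≤ -∑_{l=j}^{T-1} lbᵀ (H_l - hs)`, and each summand is at most
`‖lb‖ ‖H_l - hs‖₁` since every coordinate of `lb` is bounded by its Euclidean norm.
There are at most `T - 1` summands for each of the `T - 1` values of `j`.
-/

open Finset Filter
open scoped Classical

noncomputable section

namespace EMPC

variable {n m p : ℕ}

theorem le_biSup_finset {ι : Type*} {s : Finset ι} (f : ι → ℝ) {k : ι} (hk : k ∈ s) :
    f k ≤ ⨆ i ∈ s, f i := by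
  refine le_ciSup₂ (f := fun i (_ : i ∈ s) => f i) ((s.finite_toSet.image f).bddAbove.mono ?_) k hk
  simp only [Set.iUnion_subset_iff, Set.range_subset_iff]
  exact fun i hi => Set.mem_image_of_mem f hi

theorem l1_nonneg (v : Vec p) : 0 ≤ l1 v :=
  sum_nonneg fun i _ => abs_nonneg (v i)

theorem norm1H_nonneg (T : ℕ) (H : ℕ → Vec p) : 0 ≤ norm1H T H :=
  Real.iSup_nonneg fun _ => Real.iSup_nonneg fun _ => l1_nonneg _

theorem l1_le_norm1H {T k : ℕ} (H : ℕ → Vec p) (hk : k ∈ Icc 1 (T - 1)) :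
    l1 (H k) ≤ norm1H T H :=
  le_biSup_finset (fun k => l1 (H k)) hk

theorem abs_sum_mul_le_norm_mul_l1 (a v : Vec p) : |∑ i, a i * v i| ≤ ‖a‖ * l1 v :=
  calc |∑ i, a i * v i| ≤ ∑ i, |a i| * |v i| := by
        simpa only [abs_mul] using abs_sum_le_sum_abs (fun i => a i * v i) univ
    _ ≤ ∑ i, ‖a‖ * |v i| :=
        sum_le_sum fun i _ => mul_le_mul_of_nonneg_right (PiLp.norm_apply_le a i) (abs_nonneg _)
    _ = ‖a‖ * l1 v := (mul_sum _ _ _).symm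

theorem sum_mul_le_of_add_nonpos {ι : Type*} (S : Finset ι) {lb hs : Vec p}
    (hlb : ∀ i, 0 ≤ lb i) (hlbhs : ∑ i, lb i * hs i = 0) {H : ι → Vec p} {Y : Fin p → ℝ}
    (hY : ∀ i, ∑ l ∈ S, H l i + Y i ≤ 0) :
    ∑ i, lb i * Y i ≤ ∑ l ∈ S, ‖lb‖ * l1 (H l - hs) :=
  calc ∑ i, lb i * Y i ≤ ∑ i, lb i * -∑ l ∈ S, H l i :=
        sum_le_sum fun i _ => mul_le_mul_of_nonneg_left (by linarith [hY i]) (hlb i)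
    _ = ∑ l ∈ S, -∑ i, lb i * (H l - hs) i := by
        simp [mul_sub, sum_sub_distrib, hlbhs, mul_sum, sum_comm (s := S)]
    _ ≤ ∑ l ∈ S, ‖lb‖ * l1 (H l - hs) :=
        sum_le_sum fun l _ => (neg_le_abs _).trans (abs_sum_mul_le_norm_mul_l1 _ _)

theorem future_output_bound_general (p T : ℕ)
    (lb : Vec p) (hlb : ∀ i, 0 ≤ lb i) (hs : Vec p)
    (hlbhs : (∑ i, lb i * hs i) = 0)
    (H : ℕ → Vec p) (y : ℕ → Vec p)
    (hcon : ∀ j ∈ Finset.Icc 1 (T - 1), ∀ i : Fin p,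
      (∑ l ∈ Finset.Icc j (T - 1), H l i) + (∑ k ∈ Finset.range j, y k i) ≤ 0) :
    (∑ j ∈ Finset.Icc 1 (T - 1), ∑ k ∈ Finset.range j, ∑ i, lb i * y k i) ≤
      ((T : ℝ) - 1) ^ 2 * ‖lb‖ * norm1H T (fun k => H k - hs) := by
  set c := ‖lb‖ * norm1H T (fun k => H k - hs)
  have hc : 0 ≤ c := mul_nonneg (norm_nonneg _) (norm1H_nonneg _ _)
  have hrow : ∀ j ∈ Icc 1 (T - 1),
      ∑ k ∈ range j, ∑ i, lb i * y k i ≤ ∑ _l ∈ Icc 1 (T - 1), c := by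
    intro j hj
    rw [sum_comm]
    simp_rw [← mul_sum]
    calc _ ≤ ∑ l ∈ Icc j (T - 1), ‖lb‖ * l1 (H l - hs) :=
          sum_mul_le_of_add_nonpos _ hlb hlbhs (hcon j hj)
      _ ≤ ∑ _l ∈ Icc j (T - 1), c := sum_le_sum fun l hl =>
          mul_le_mul_of_nonneg_left
            (l1_le_norm1H (fun k => H k - hs) (Icc_subset_Icc_left (mem_Icc.1 hj).1 hl))
            (norm_nonneg _)
      _ ≤ ∑ _l ∈ Icc 1 (T - 1), c :=
          sum_le_sum_of_subset_of_nonneg (Icc_subset_Icc_left (mem_Icc.1 hj).1) fun _ _ _ => hc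
  calc _ ≤ ∑ _j ∈ Icc 1 (T - 1), ∑ _l ∈ Icc 1 (T - 1), c := sum_le_sum hrow
    _ = ((T - 1 : ℕ) : ℝ) ^ 2 * c := by simp [sq, mul_assoc]
    _ ≤ ((T : ℝ) - 1) ^ 2 * c :=
        -- the ℕ-subtraction `T - 1` truncates at `T = 0`
        mul_le_mul_of_nonneg_right (by rcases T with _ | T <;> simp) hc
    _ = _ := (mul_assoc _ _ _).symm

theorem future_output_bound (p T : ℕ) (hp : 1 ≤ p) (hT : 2 ≤ T)
    (lb : Vec p) (hlb : ∀ i, 0 ≤ lb i) (hs : Vec p)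
    (hlbhs : (∑ i, lb i * hs i) = 0)
    (H : ℕ → Vec p) (y : ℕ → Vec p)
    (hcon : ∀ j ∈ Finset.Icc 1 (T - 1), ∀ i : Fin p,
      (∑ l ∈ Finset.Icc j (T - 1), H l i) + (∑ k ∈ Finset.range j, y k i) ≤ 0) :
    (∑ j ∈ Finset.Icc 1 (T - 1), ∑ k ∈ Finset.range j, ∑ i, lb i * y k i) ≤
      ((T : ℝ) - 1) ^ 2 * ‖lb‖ * norm1H T (fun k => H k - hs) :=
  future_output_bound_general p T lb hlb hs hlbhs H y hcon

end EMPC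
end
end
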